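/- arXiv:2403.01053 — 2 statements merged into one kernel-verified Lean document; each statement's English description precedes it below -/
import Mathlib

section
/- For any unit vector μ on the unit sphere S of E and any κ > 0, the differential entropy of the vMF distribution is strictly below that of the uniform distribution on the sphere: H_μ(κ) < log σ(S). (At κ = 0 the vMF distribution is the uniform distribution on S and H_μ(0) = log σ(S).) -/
open MeasureTheory Metric
open scoped RealInnerProductSpace

/-- The canonical surface measure on the unit sphere of `EuclideanSpace ℝ (Fin d)`. -/
noncomputable def sphMeas (d : ℕ) :
    Measure (sphere (0 : EuclideanSpace ℝ (Fin d)) 1) :=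
  (volume : Measure (EuclideanSpace ℝ (Fin d))).toSphere

/-- The vMF normalizing integral `Z_μ(κ) = ∫_{z ∈ S} exp (κ ⟪μ, z⟫) dσ(z)`. -/
noncomputable def Zfun (d : ℕ) (μ : sphere (0 : EuclideanSpace ℝ (Fin d)) 1) (κ : ℝ) : ℝ :=
  ∫ z, Real.exp (κ * ⟪(μ : EuclideanSpace ℝ (Fin d)), (z : EuclideanSpace ℝ (Fin d))⟫)
    ∂(sphMeas d)

/-- The first-moment integral `Z_μ'(κ) = ∫_{z ∈ S} ⟪μ, z⟫ · exp (κ ⟪μ, z⟫) dσ(z)`. -/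
noncomputable def Mfun (d : ℕ) (μ : sphere (0 : EuclideanSpace ℝ (Fin d)) 1) (κ : ℝ) : ℝ :=
  ∫ z, ⟪(μ : EuclideanSpace ℝ (Fin d)), (z : EuclideanSpace ℝ (Fin d))⟫ *
      Real.exp (κ * ⟪(μ : EuclideanSpace ℝ (Fin d)), (z : EuclideanSpace ℝ (Fin d))⟫)
    ∂(sphMeas d)

/-- The vMF density `q_{μ,κ}(z) = Z_μ(κ)⁻¹ · exp (κ ⟪μ, z⟫)` with respect to `σ`. -/
noncomputable def qfun (d : ℕ) (μ : sphere (0 : EuclideanSpace ℝ (Fin d)) 1) (κ : ℝ)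
    (z : sphere (0 : EuclideanSpace ℝ (Fin d)) 1) : ℝ :=
  (Zfun d μ κ)⁻¹ *
    Real.exp (κ * ⟪(μ : EuclideanSpace ℝ (Fin d)), (z : EuclideanSpace ℝ (Fin d))⟫)

/-- The differential entropy `H_μ(κ) = −∫_{z ∈ S} q_{μ,κ}(z) · log q_{μ,κ}(z) dσ(z)`. -/
noncomputable def Hent (d : ℕ) (μ : sphere (0 : EuclideanSpace ℝ (Fin d)) 1) (κ : ℝ) : ℝ :=
  -∫ z, qfun d μ κ z * Real.log (qfun d μ κ z) ∂(sphMeas d)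

section Aux

open scoped Pointwise

instance sphMeas_finite (d : ℕ) : IsFiniteMeasure (sphMeas d) := by
  unfold sphMeas; infer_instance

/-- `sphMeas` is positive on nonempty open subsets of the sphere. -/
lemma sphMeas_pos_of_isOpen {d : ℕ} (hd : 1 ≤ d)
    {s : Set (sphere (0 : EuclideanSpace ℝ (Fin d)) 1)}
    (hs : IsOpen s) (hne : s.Nonempty) : 0 < sphMeas d s := by
  classical
  set E := EuclideanSpace ℝ (Fin d)
  have h1 : sphMeas d s = Module.finrank ℝ E *
      (volume : Measure E) (Set.Ioo (0:ℝ) 1 • (Subtype.val '' s)) :=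
    Measure.toSphere_apply' _ hs.measurableSet
  set r1 : Set.Ioi (0:ℝ) := ⟨1, Set.mem_Ioi.2 one_pos⟩ with hr1
  have h2 := Measure.toSphere_apply_aux (volume : Measure E) s r1
  have hcone : (volume : Measure E) (Set.Ioo (0:ℝ) 1 • (Subtype.val '' s)) =
      (volume : Measure E)
        (Subtype.val '' ((homeomorphUnitSphereProd E) ⁻¹' (s ×ˢ Set.Iio r1))) := h2.symm
  -- the cone is open and nonempty
  have hIio : IsOpen (Set.Iio r1) := by
    have : Set.Iio r1 = Subtype.val ⁻¹' Set.Iio (1:ℝ) := by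
      ext x; simp [r1, Set.mem_Iio, ← Subtype.coe_lt_coe]
    rw [this]
    exact isOpen_Iio.preimage continuous_subtype_val
  have hopen : IsOpen ((homeomorphUnitSphereProd E) ⁻¹' (s ×ˢ Set.Iio r1)) :=
    (hs.prod hIio).preimage (homeomorphUnitSphereProd E).continuous
  have hU : IsOpen (Subtype.val ''
      ((homeomorphUnitSphereProd E) ⁻¹' (s ×ˢ Set.Iio r1))) :=
    (isOpen_compl_singleton).isOpenMap_subtype_val _ hopen
  obtain ⟨z, hz⟩ := hne
  have hmem : (homeomorphUnitSphereProd E).symm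
      (z, ⟨(1:ℝ)/2, by norm_num⟩) ∈ (homeomorphUnitSphereProd E) ⁻¹' (s ×ˢ Set.Iio r1) := by
    simp only [Set.mem_preimage, Homeomorph.apply_symm_apply]
    refine ⟨hz, ?_⟩
    simp only [Set.mem_Iio, r1, ← Subtype.coe_lt_coe]
    norm_num
  have hUne : (Subtype.val ''
      ((homeomorphUnitSphereProd E) ⁻¹' (s ×ˢ Set.Iio r1))).Nonempty :=
    ⟨_, Set.mem_image_of_mem _ hmem⟩
  have hvol : 0 < (volume : Measure E)
      (Subtype.val '' ((homeomorphUnitSphereProd E) ⁻¹' (s ×ˢ Set.Iio r1))) :=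
    hU.measure_pos _ hUne
  rw [h1, hcone]
  have hdim : (Module.finrank ℝ E : ENNReal) ≠ 0 := by
    have hdE : Module.finrank ℝ E = d := by simp [E, finrank_euclideanSpace]
    rw [hdE]
    exact_mod_cast (by omega : d ≠ 0)
  exact ENNReal.mul_pos hdim hvol.ne'

end Aux

/-- For any `κ > 0` the vMF differential entropy is strictly below the entropy
`log σ(S)` of the uniform distribution on the sphere. -/
theorem vMF_entropy_lt_uniform (d : ℕ) (hd : 2 ≤ d)
    (μ : sphere (0 : EuclideanSpace ℝ (Fin d)) 1) (κ : ℝ) (hκ : 0 < κ) :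
    Hent d μ κ < Real.log ((sphMeas d Set.univ).toReal) := by
  classical
  set σ : Measure (sphere (0 : EuclideanSpace ℝ (Fin d)) 1) := sphMeas d with hσdef
  set f : sphere (0 : EuclideanSpace ℝ (Fin d)) 1 → ℝ :=
    fun z => ⟪(μ : EuclideanSpace ℝ (Fin d)), (z : EuclideanSpace ℝ (Fin d))⟫ with hfdef
  have hfc : Continuous f := Continuous.inner continuous_const continuous_subtype_val
  have key : ∀ {g : sphere (0 : EuclideanSpace ℝ (Fin d)) 1 → ℝ},
      Continuous g → Integrable g σ := fun hg =>
    hg.integrable_of_hasCompactSupport (HasCompactSupport.of_compactSpace _)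
  have hσuniv : 0 < σ Set.univ :=
    sphMeas_pos_of_isOpen (by omega) isOpen_univ ⟨μ, trivial⟩
  set σU : ℝ := (σ Set.univ).toReal with hσUdef
  have hσU : 0 < σU := ENNReal.toReal_pos hσuniv.ne' (measure_ne_top _ _)
  have : NeZero σ := ⟨Measure.measure_univ_ne_zero.mp hσuniv.ne'⟩
  set Z : ℝ := Zfun d μ κ with hZdef
  have hec : Continuous (fun z => Real.exp (κ * f z)) :=
    Real.continuous_exp.comp (continuous_const.mul hfc)
  have hZint : ∫ z, Real.exp (κ * f z) ∂σ = Z := rfl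
  have hZpos : 0 < Z := hZint ▸ integral_exp_pos (key hec)
  set q : sphere (0 : EuclideanSpace ℝ (Fin d)) 1 → ℝ := qfun d μ κ with hqdef
  have hqe : q = fun z => Z⁻¹ * Real.exp (κ * f z) := rfl
  have hqpos : ∀ z, 0 < q z := fun z => mul_pos (inv_pos.2 hZpos) (Real.exp_pos _)
  have hqc : Continuous q := by rw [hqe]; exact continuous_const.mul hec
  have hq1 : ∫ z, q z ∂σ = 1 := by
    rw [hqe, integral_const_mul, hZint]
    exact inv_mul_cancel₀ hZpos.ne'
  set G : sphere (0 : EuclideanSpace ℝ (Fin d)) 1 → ℝ :=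
    fun z => q z * Real.log (q z * σU) with hGdef
  have hGc : Continuous G :=
    hqc.mul ((hqc.mul continuous_const).log fun z => (mul_pos (hqpos z) hσU).ne')
  have hqlc : Continuous (fun z => q z * Real.log (q z)) :=
    hqc.mul (hqc.log fun z => (hqpos z).ne')
  have hGint : ∫ z, G z ∂σ = (∫ z, q z * Real.log (q z) ∂σ) + Real.log σU := by
    have hsplit : G = fun z => q z * Real.log (q z) + q z * Real.log σU := by
      funext z
      show q z * Real.log (q z * σU) = q z * Real.log (q z) + q z * Real.log σU
      rw [Real.log_mul (hqpos z).ne' hσU.ne', mul_add]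
    rw [hsplit, integral_add (key hqlc) ((key hqc).mul_const _), integral_mul_const, hq1,
      one_mul]
  have hHent : Hent d μ κ = Real.log σU - ∫ z, G z ∂σ := by
    have h0 : Hent d μ κ = -∫ z, q z * Real.log (q z) ∂σ := rfl
    rw [h0, hGint]; ring
  set D : sphere (0 : EuclideanSpace ℝ (Fin d)) 1 → ℝ :=
    fun z => G z - (q z - σU⁻¹) with hDdef
  have hDc : Continuous D := hGc.sub (hqc.sub continuous_const)
  have hkey2 : ∀ z, q z * (q z * σU)⁻¹ = σU⁻¹ := by
    intro z
    rw [mul_inv, ← mul_assoc, mul_inv_cancel₀ (hqpos z).ne', one_mul]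
  have hDnn : ∀ z, 0 ≤ D z := by
    intro z
    have hx : 0 < q z * σU := mul_pos (hqpos z) hσU
    have h := Real.log_le_sub_one_of_pos (inv_pos.2 hx)
    rw [Real.log_inv] at h
    have h2 : 1 - (q z * σU)⁻¹ ≤ Real.log (q z * σU) := by linarith
    have h3 : q z * (1 - (q z * σU)⁻¹) ≤ q z * Real.log (q z * σU) :=
      mul_le_mul_of_nonneg_left h2 (hqpos z).le
    have h4 : q z * (1 - (q z * σU)⁻¹) = q z - σU⁻¹ := by
      rw [mul_sub, mul_one, hkey2 z]
    show 0 ≤ q z * Real.log (q z * σU) - (q z - σU⁻¹)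
    linarith
  have hDstrict : ∀ z, q z * σU ≠ 1 → 0 < D z := by
    intro z hne
    have hx : 0 < q z * σU := mul_pos (hqpos z) hσU
    have hxinv : (q z * σU)⁻¹ ≠ 1 := fun h1 => hne (by rwa [inv_eq_one] at h1)
    have h := Real.log_lt_sub_one_of_pos (inv_pos.2 hx) hxinv
    rw [Real.log_inv] at h
    have h2 : 1 - (q z * σU)⁻¹ < Real.log (q z * σU) := by linarith
    have h3 : q z * (1 - (q z * σU)⁻¹) < q z * Real.log (q z * σU) :=
      (mul_lt_mul_iff_right₀ (hqpos z)).2 h2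
    have h4 : q z * (1 - (q z * σU)⁻¹) = q z - σU⁻¹ := by
      rw [mul_sub, mul_one, hkey2 z]
    show 0 < q z * Real.log (q z * σU) - (q z - σU⁻¹)
    linarith
  have hsub0 : ∫ z, (q z - σU⁻¹) ∂σ = 0 := by
    rw [integral_sub (key hqc) (integrable_const _), hq1, integral_const, smul_eq_mul]
    rw [measureReal_def, ← hσUdef]
    rw [mul_inv_cancel₀ hσU.ne', sub_self]
  have hDG : ∫ z, D z ∂σ = ∫ z, G z ∂σ := by
    have h5 : ∫ z, D z ∂σ = (∫ z, G z ∂σ) - ∫ z, (q z - σU⁻¹) ∂σ :=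
      integral_sub (key hGc) ((key hqc).sub (integrable_const _))
    rw [h5, hsub0, sub_zero]
  have hGnn : 0 ≤ ∫ z, G z ∂σ := hDG ▸ integral_nonneg hDnn
  have hGne : ∫ z, G z ∂σ ≠ 0 := by
    intro hG0
    have hD0 : ∫ z, D z ∂σ = 0 := by rw [hDG, hG0]
    have hae : D =ᵐ[σ] 0 := (integral_eq_zero_iff_of_nonneg hDnn (key hDc)).mp hD0
    have hae2 : ∀ᵐ z ∂σ, κ * f z = Real.log (Z * σU⁻¹) := by
      filter_upwards [hae] with z hz
      have hq1z : q z * σU = 1 := by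
        by_contra hne
        exact (hDstrict z hne).ne' hz
      have h5 : Z⁻¹ * Real.exp (κ * f z) * σU = 1 := by
        have := hq1z
        rw [hqe] at this
        exact this
      have hexp : Real.exp (κ * f z) = Z * σU⁻¹ := by
        field_simp at h5
        field_simp
        linarith
      calc κ * f z = Real.log (Real.exp (κ * f z)) := (Real.log_exp _).symm
        _ = Real.log (Z * σU⁻¹) := by rw [hexp]
    have hnull : σ {z | ¬ (κ * f z = Real.log (Z * σU⁻¹))} = 0 := by
      rw [← ae_iff]
      exact hae2
    have hnorm : ‖(μ : EuclideanSpace ℝ (Fin d))‖ = 1 := mem_sphere_zero_iff_norm.mp μ.2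
    have hfμ : f μ = 1 := by
      show ⟪(μ : EuclideanSpace ℝ (Fin d)), (μ : EuclideanSpace ℝ (Fin d))⟫ = 1
      rw [real_inner_self_eq_norm_sq, hnorm]
      norm_num
    have hnegmem : (-(μ : EuclideanSpace ℝ (Fin d))) ∈
        sphere (0 : EuclideanSpace ℝ (Fin d)) 1 := by
      rw [mem_sphere_zero_iff_norm, norm_neg, hnorm]
    set ν : sphere (0 : EuclideanSpace ℝ (Fin d)) 1 := ⟨-(μ : EuclideanSpace ℝ (Fin d)), hnegmem⟩
      with hνdef
    have hfν : f ν = -1 := by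
      show ⟪(μ : EuclideanSpace ℝ (Fin d)), (ν : EuclideanSpace ℝ (Fin d))⟫ = -1
      rw [hνdef]
      rw [inner_neg_right, real_inner_self_eq_norm_sq, hnorm]
      norm_num
    by_cases hc : 0 ≤ Real.log (Z * σU⁻¹)
    · have hA : IsOpen (f ⁻¹' Set.Iio 0) := isOpen_Iio.preimage hfc
      have hAne : (f ⁻¹' Set.Iio 0).Nonempty := ⟨ν, by simp [Set.mem_preimage, hfν]⟩
      have hApos : 0 < σ (f ⁻¹' Set.Iio 0) := sphMeas_pos_of_isOpen (by omega) hA hAne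
      have hsub : f ⁻¹' Set.Iio 0 ⊆ {z | ¬ (κ * f z = Real.log (Z * σU⁻¹))} := by
        intro z hz
        have hneg : κ * f z < 0 := mul_neg_of_pos_of_neg hκ hz
        simp only [Set.mem_setOf_eq]
        intro heq
        rw [heq] at hneg
        linarith
      exact absurd (measure_mono_null hsub hnull) hApos.ne'
    · push_neg at hc
      have hB : IsOpen (f ⁻¹' Set.Ioi 0) := isOpen_Ioi.preimage hfc
      have hBne : (f ⁻¹' Set.Ioi 0).Nonempty := ⟨μ, by simp [Set.mem_preimage, hfμ]⟩
      have hBpos : 0 < σ (f ⁻¹' Set.Ioi 0) := sphMeas_pos_of_isOpen (by omega) hB hBne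
      have hsub : f ⁻¹' Set.Ioi 0 ⊆ {z | ¬ (κ * f z = Real.log (Z * σU⁻¹))} := by
        intro z hz
        have hpos : 0 < κ * f z := mul_pos hκ hz
        simp only [Set.mem_setOf_eq]
        intro heq
        rw [heq] at hpos
        linarith
      exact absurd (measure_mono_null hsub hnull) hBpos.ne'
  have hGpos : 0 < ∫ z, G z ∂σ := lt_of_le_of_ne hGnn (Ne.symm hGne)
  rw [hHent]
  linarith
end

section
/- (Closed form underlying Eq. (10)–(11) of the paper) For unit vectors μ₁, μ₂ on the unit sphere S of E and concentrations κ₁, κ₂ > 0, the Kullback–Leibler divergence between the two von Mises–Fisher distributions admits the closed form KL(vMF(μ₁, κ₁) ‖ vMF(μ₂, κ₂)) = ∫_{z ∈ S} q_{μ₁,κ₁}(z) · log( q_{μ₁,κ₁}(z) / q_{μ₂,κ₂}(z) ) dσ(z) = log Z(κ₂) − log Z(κ₁) + (κ₁ − κ₂ ⟪μ₁, μ₂⟫) · A(κ₁), where A(κ₁) = (∫_{z ∈ S} ⟪μ₁, z⟫ · exp(κ₁ ⟪μ₁, z⟫) dσ(z)) / Z(κ₁) is the mean resultant length of vMF(μ₁,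 κ₁). -/
open MeasureTheory Metric
open scoped RealInnerProductSpace Pointwise ENNReal

section Aux
variable {d : ℕ}

lemma sph_map_mem (e : EuclideanSpace ℝ (Fin d) ≃ₗᵢ[ℝ] EuclideanSpace ℝ (Fin d))
    (z : sphere (0 : EuclideanSpace ℝ (Fin d)) 1) :
    e (z : EuclideanSpace ℝ (Fin d)) ∈ sphere (0 : EuclideanSpace ℝ (Fin d)) 1 := by
  rw [mem_sphere_zero_iff_norm, e.norm_map]
  exact mem_sphere_zero_iff_norm.mp z.2

/-- The homeomorphism of the unit sphere induced by a linear isometry equivalence. -/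
noncomputable def sphHomeo (e : EuclideanSpace ℝ (Fin d) ≃ₗᵢ[ℝ] EuclideanSpace ℝ (Fin d)) :
    sphere (0 : EuclideanSpace ℝ (Fin d)) 1 ≃ₜ sphere (0 : EuclideanSpace ℝ (Fin d)) 1 :=
  { toFun := fun z => ⟨e z, sph_map_mem e z⟩
    invFun := fun z => ⟨e.symm z, sph_map_mem e.symm z⟩
    left_inv := fun z => Subtype.ext (e.symm_apply_apply _)
    right_inv := fun z => Subtype.ext (e.apply_symm_apply _)
    continuous_toFun := (e.continuous.comp continuous_subtype_val).subtype_mk _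
    continuous_invFun := (e.symm.continuous.comp continuous_subtype_val).subtype_mk _ }

@[simp] lemma sphHomeo_coe (e : EuclideanSpace ℝ (Fin d) ≃ₗᵢ[ℝ] EuclideanSpace ℝ (Fin d))
    (z : sphere (0 : EuclideanSpace ℝ (Fin d)) 1) :
    ((sphHomeo e z : sphere (0 : EuclideanSpace ℝ (Fin d)) 1) : EuclideanSpace ℝ (Fin d))
      = e (z : EuclideanSpace ℝ (Fin d)) := rfl

lemma coe_image_preimage (e : EuclideanSpace ℝ (Fin d) ≃ₗᵢ[ℝ] EuclideanSpace ℝ (Fin d))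
    (s : Set (sphere (0 : EuclideanSpace ℝ (Fin d)) 1)) :
    Subtype.val '' (sphHomeo e ⁻¹' s) = e ⁻¹' (Subtype.val '' s) := by
  ext x
  constructor
  · rintro ⟨z, hz, rfl⟩
    exact ⟨sphHomeo e z, hz, rfl⟩
  · rintro ⟨y, hy, hxy⟩
    have hx : x ∈ sphere (0 : EuclideanSpace ℝ (Fin d)) 1 := by
      have h1 : ‖e x‖ = 1 := by rw [← hxy]; exact mem_sphere_zero_iff_norm.mp y.2
      rw [e.norm_map] at h1
      exact mem_sphere_zero_iff_norm.mpr h1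
    refine ⟨⟨x, hx⟩, ?_, rfl⟩
    have h2 : sphHomeo e ⟨x, hx⟩ = y := Subtype.ext hxy.symm
    rw [Set.mem_preimage, h2]; exact hy

lemma smul_preimage (e : EuclideanSpace ℝ (Fin d) ≃ₗᵢ[ℝ] EuclideanSpace ℝ (Fin d))
    (A : Set (EuclideanSpace ℝ (Fin d))) :
    Set.Ioo (0 : ℝ) 1 • (e ⁻¹' A) = e ⁻¹' (Set.Ioo (0 : ℝ) 1 • A) := by
  ext x
  constructor
  · rintro ⟨c, hc, y, hy, rfl⟩
    exact ⟨c, hc, e y, hy, (e.map_smul c y).symm⟩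
  · rintro ⟨c, hc, y, hy, hxy⟩
    refine ⟨c, hc, e.symm y, by simpa using hy, ?_⟩
    apply e.injective
    rw [e.map_smul, e.apply_symm_apply]
    exact hxy

/-- `sphMeas` is invariant under linear isometries. -/
lemma sphMeas_measurePreserving (e : EuclideanSpace ℝ (Fin d) ≃ₗᵢ[ℝ] EuclideanSpace ℝ (Fin d)) :
    MeasurePreserving (sphHomeo e) (sphMeas d) (sphMeas d) := by
  refine ⟨(sphHomeo e).continuous.measurable, ?_⟩
  refine Measure.ext fun s hs => ?_
  rw [Measure.map_apply (sphHomeo e).continuous.measurable hs]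
  have hs' : MeasurableSet (sphHomeo e ⁻¹' s) := (sphHomeo e).continuous.measurable hs
  rw [sphMeas, Measure.toSphere_apply' _ hs', Measure.toSphere_apply' _ hs,
    coe_image_preimage, smul_preimage]
  congr 1
  have hcoe : (⇑e : EuclideanSpace ℝ (Fin d) → EuclideanSpace ℝ (Fin d))
      = ⇑(e.toHomeomorph.toMeasurableEquiv) := rfl
  rw [hcoe, ← MeasurableEquiv.map_apply]
  rw [show Measure.map (⇑(e.toHomeomorph.toMeasurableEquiv)) volume = volume from
    by rw [← hcoe, e.measurePreserving.map_eq]]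

lemma integral_comp_sphHomeo (e : EuclideanSpace ℝ (Fin d) ≃ₗᵢ[ℝ] EuclideanSpace ℝ (Fin d))
    (f : sphere (0 : EuclideanSpace ℝ (Fin d)) 1 → ℝ) :
    ∫ z, f (sphHomeo e z) ∂(sphMeas d) = ∫ z, f z ∂(sphMeas d) :=
  (sphMeas_measurePreserving e).integral_comp (sphHomeo e).measurableEmbedding f

/-- Integral of an odd (w.r.t. reflection) factor vanishes. -/
lemma integral_inner_orth_zero (μ : sphere (0 : EuclideanSpace ℝ (Fin d)) 1) (κ : ℝ)
    (w : EuclideanSpace ℝ (Fin d)) (hw : ⟪(μ : EuclideanSpace ℝ (Fin d)), w⟫ = 0) :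
    ∫ z, ⟪w, (z : EuclideanSpace ℝ (Fin d))⟫ *
        Real.exp (κ * ⟪(μ : EuclideanSpace ℝ (Fin d)), (z : EuclideanSpace ℝ (Fin d))⟫)
      ∂(sphMeas d) = 0 := by
  set e : EuclideanSpace ℝ (Fin d) ≃ₗᵢ[ℝ] EuclideanSpace ℝ (Fin d) :=
    Submodule.reflection (Submodule.span ℝ {w})ᗮ with he
  have hew : e w = -w := Submodule.reflection_orthogonalComplement_singleton_eq_neg w
  have heμ : e (μ : EuclideanSpace ℝ (Fin d)) = (μ : EuclideanSpace ℝ (Fin d)) :=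
    Submodule.reflection_mem_subspace_eq_self
      (Submodule.mem_orthogonal_singleton_iff_inner_right.mpr (by rw [real_inner_comm]; exact hw))
  set f : sphere (0 : EuclideanSpace ℝ (Fin d)) 1 → ℝ := fun z =>
    ⟪w, (z : EuclideanSpace ℝ (Fin d))⟫ *
      Real.exp (κ * ⟪(μ : EuclideanSpace ℝ (Fin d)), (z : EuclideanSpace ℝ (Fin d))⟫) with hf
  have key : ∀ z, f (sphHomeo e z) = -f z := by
    intro z
    have h1 : ⟪w, e (z : EuclideanSpace ℝ (Fin d))⟫ = -⟪w, (z : EuclideanSpace ℝ (Fin d))⟫ := by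
      calc ⟪w, e (z : EuclideanSpace ℝ (Fin d))⟫
          = ⟪e (e w), e (z : EuclideanSpace ℝ (Fin d))⟫ := by
            rw [he, Submodule.reflection_reflection]
        _ = ⟪e w, (z : EuclideanSpace ℝ (Fin d))⟫ := e.inner_map_map _ _
        _ = -⟪w, (z : EuclideanSpace ℝ (Fin d))⟫ := by rw [hew, inner_neg_left]
    have h2 : ⟪(μ : EuclideanSpace ℝ (Fin d)), e (z : EuclideanSpace ℝ (Fin d))⟫
        = ⟪(μ : EuclideanSpace ℝ (Fin d)), (z : EuclideanSpace ℝ (Fin d))⟫ := by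
      calc ⟪(μ : EuclideanSpace ℝ (Fin d)), e (z : EuclideanSpace ℝ (Fin d))⟫
          = ⟪e (μ : EuclideanSpace ℝ (Fin d)), e (z : EuclideanSpace ℝ (Fin d))⟫ := by rw [heμ]
        _ = _ := e.inner_map_map _ _
    show ⟪w, ((sphHomeo e z : sphere (0 : EuclideanSpace ℝ (Fin d)) 1) :
        EuclideanSpace ℝ (Fin d))⟫ * Real.exp (κ * ⟪(μ : EuclideanSpace ℝ (Fin d)),
        ((sphHomeo e z : sphere (0 : EuclideanSpace ℝ (Fin d)) 1) :
        EuclideanSpace ℝ (Fin d))⟫) = -f z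
    rw [sphHomeo_coe, h1, h2]
    simp only [hf]
    ring
  have h3 := integral_comp_sphHomeo e f
  rw [integral_congr_ae (Filter.Eventually.of_forall key), integral_neg] at h3
  have h4 : ∫ z, f z ∂(sphMeas d) = 0 := by linarith
  exact h4

end Aux

section Main
variable {d : ℕ}

instance : IsFiniteMeasure (sphMeas d) := by unfold sphMeas; infer_instance

lemma cont_inner (v : EuclideanSpace ℝ (Fin d)) :
    Continuous (fun z : sphere (0 : EuclideanSpace ℝ (Fin d)) 1 =>
      ⟪v, (z : EuclideanSpace ℝ (Fin d))⟫) :=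
  continuous_const.inner continuous_subtype_val

lemma integrable_cont {f : sphere (0 : EuclideanSpace ℝ (Fin d)) 1 → ℝ}
    (hf : Continuous f) : Integrable f (sphMeas d) :=
  hf.integrable_of_hasCompactSupport
    (IsCompact.of_isClosed_subset isCompact_univ (isClosed_tsupport f) (Set.subset_univ _))

lemma sphMeas_univ_pos (hd : 1 ≤ d) : 0 < (sphMeas d) Set.univ := by
  rw [sphMeas, Measure.toSphere_apply_univ]
  have h1 : (0:ℝ≥0∞) < volume (ball (0 : EuclideanSpace ℝ (Fin d)) 1) :=
    measure_ball_pos _ _ one_pos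
  have h2 : (Module.finrank ℝ (EuclideanSpace ℝ (Fin d)) : ℝ≥0∞) ≠ 0 := by
    simp only [finrank_euclideanSpace_fin, ne_eq, Nat.cast_eq_zero]
    omega
  exact ENNReal.mul_pos h2 h1.ne'

lemma Zfun_pos (hd : 1 ≤ d) (μ : sphere (0 : EuclideanSpace ℝ (Fin d)) 1) (κ : ℝ) :
    0 < Zfun d μ κ := by
  have hint : Integrable (fun z : sphere (0 : EuclideanSpace ℝ (Fin d)) 1 =>
      Real.exp (κ * ⟪(μ : EuclideanSpace ℝ (Fin d)), (z : EuclideanSpace ℝ (Fin d))⟫))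
      (sphMeas d) :=
    integrable_cont (Real.continuous_exp.comp (continuous_const.mul (cont_inner _)))
  have hb : ∀ z : sphere (0 : EuclideanSpace ℝ (Fin d)) 1,
      Real.exp (-|κ|) ≤ Real.exp (κ * ⟪(μ : EuclideanSpace ℝ (Fin d)),
        (z : EuclideanSpace ℝ (Fin d))⟫) := by
    intro z
    apply Real.exp_le_exp.mpr
    have h1 : |⟪(μ : EuclideanSpace ℝ (Fin d)), (z : EuclideanSpace ℝ (Fin d))⟫| ≤ 1 := by
      have := abs_real_inner_le_norm (μ : EuclideanSpace ℝ (Fin d))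
        (z : EuclideanSpace ℝ (Fin d))
      rwa [norm_eq_of_mem_sphere μ, norm_eq_of_mem_sphere z, one_mul] at this
    have h2 : |κ * ⟪(μ : EuclideanSpace ℝ (Fin d)), (z : EuclideanSpace ℝ (Fin d))⟫| ≤ |κ| := by
      rw [abs_mul]
      calc |κ| * _ ≤ |κ| * 1 := by gcongr
        _ = |κ| := mul_one _
    linarith [neg_abs_le (κ * ⟪(μ : EuclideanSpace ℝ (Fin d)), (z : EuclideanSpace ℝ (Fin d))⟫),
      h2]
  have hmono := integral_mono (integrable_const (Real.exp (-|κ|))) hint hb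
  rw [integral_const] at hmono
  have hpos : 0 < ((sphMeas d) Set.univ).toReal :=
    ENNReal.toReal_pos (sphMeas_univ_pos hd).ne' (measure_ne_top _ _)
  have : 0 < ((sphMeas d) Set.univ).toReal • Real.exp (-|κ|) := by
    rw [smul_eq_mul]; positivity
  exact lt_of_lt_of_le this hmono

end Main

/-- Closed form of the KL divergence between two vMF distributions:
`KL(vMF(μ₁,κ₁) ‖ vMF(μ₂,κ₂)) = log Z(κ₂) − log Z(κ₁) + (κ₁ − κ₂ ⟪μ₁, μ₂⟫) · A(κ₁)`. -/
theorem vMF_KL_closed_form (d : ℕ) (hd : 2 ≤ d)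
    (μ₁ μ₂ : sphere (0 : EuclideanSpace ℝ (Fin d)) 1) (κ₁ κ₂ : ℝ)
    (hκ₁ : 0 < κ₁) (hκ₂ : 0 < κ₂) :
    (∫ z, qfun d μ₁ κ₁ z * Real.log (qfun d μ₁ κ₁ z / qfun d μ₂ κ₂ z) ∂(sphMeas d))
      = Real.log (Zfun d μ₂ κ₂) - Real.log (Zfun d μ₁ κ₁)
        + (κ₁ - κ₂ * ⟪(μ₁ : EuclideanSpace ℝ (Fin d)), (μ₂ : EuclideanSpace ℝ (Fin d))⟫) *
            (Mfun d μ₁ κ₁ / Zfun d μ₁ κ₁) := by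
  have hd1 : 1 ≤ d := le_trans (by norm_num) hd
  set Z₁ := Zfun d μ₁ κ₁ with hZ₁def
  set Z₂ := Zfun d μ₂ κ₂ with hZ₂def
  have hZ₁ : 0 < Z₁ := Zfun_pos hd1 μ₁ κ₁
  have hZ₂ : 0 < Z₂ := Zfun_pos hd1 μ₂ κ₂
  set a : sphere (0 : EuclideanSpace ℝ (Fin d)) 1 → ℝ := fun z =>
    ⟪(μ₁ : EuclideanSpace ℝ (Fin d)), (z : EuclideanSpace ℝ (Fin d))⟫ with ha
  set b : sphere (0 : EuclideanSpace ℝ (Fin d)) 1 → ℝ := fun z =>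
    ⟪(μ₂ : EuclideanSpace ℝ (Fin d)), (z : EuclideanSpace ℝ (Fin d))⟫ with hb
  set t : ℝ := ⟪(μ₁ : EuclideanSpace ℝ (Fin d)), (μ₂ : EuclideanSpace ℝ (Fin d))⟫ with ht
  -- integrability
  have hca : Continuous a := cont_inner _
  have hcb : Continuous b := cont_inner _
  have hce : Continuous (fun z => Real.exp (κ₁ * a z)) :=
    Real.continuous_exp.comp (continuous_const.mul hca)
  have hIe : Integrable (fun z => Real.exp (κ₁ * a z)) (sphMeas d) := integrable_cont hce
  have hIa : Integrable (fun z => a z * Real.exp (κ₁ * a z)) (sphMeas d) :=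
    integrable_cont (hca.mul hce)
  have hIb : Integrable (fun z => b z * Real.exp (κ₁ * a z)) (sphMeas d) :=
    integrable_cont (hcb.mul hce)
  -- pointwise identity
  have hpt : ∀ z, qfun d μ₁ κ₁ z * Real.log (qfun d μ₁ κ₁ z / qfun d μ₂ κ₂ z)
      = (Real.log Z₂ - Real.log Z₁) * (Z₁⁻¹ * Real.exp (κ₁ * a z))
        + (Z₁⁻¹ * κ₁) * (a z * Real.exp (κ₁ * a z))
        - (Z₁⁻¹ * κ₂) * (b z * Real.exp (κ₁ * a z)) := by
    intro z
    have he₁ : (0:ℝ) < Real.exp (κ₁ * a z) := Real.exp_pos _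
    have he₂ : (0:ℝ) < Real.exp (κ₂ * b z) := Real.exp_pos _
    have hq₁ : qfun d μ₁ κ₁ z = Z₁⁻¹ * Real.exp (κ₁ * a z) := rfl
    have hq₂ : qfun d μ₂ κ₂ z = Z₂⁻¹ * Real.exp (κ₂ * b z) := rfl
    have hq₁pos : 0 < qfun d μ₁ κ₁ z := by rw [hq₁]; positivity
    have hq₂pos : 0 < qfun d μ₂ κ₂ z := by rw [hq₂]; positivity
    rw [Real.log_div hq₁pos.ne' hq₂pos.ne', hq₁, hq₂,
      Real.log_mul (by positivity) he₁.ne', Real.log_mul (by positivity) he₂.ne',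
      Real.log_inv, Real.log_inv, Real.log_exp, Real.log_exp]
    ring
  rw [integral_congr_ae (Filter.Eventually.of_forall hpt)]
  have hInt1 : Integrable (fun z => (Real.log Z₂ - Real.log Z₁) * (Z₁⁻¹ * Real.exp (κ₁ * a z))
      + (Z₁⁻¹ * κ₁) * (a z * Real.exp (κ₁ * a z))) (sphMeas d) :=
    ((hIe.const_mul _).const_mul _).add (hIa.const_mul _)
  rw [integral_sub hInt1 (hIb.const_mul _),
    integral_add ((hIe.const_mul _).const_mul _) (hIa.const_mul _),
    integral_const_mul, integral_const_mul, integral_const_mul, integral_const_mul]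
  have hZint : ∫ z, Real.exp (κ₁ * a z) ∂(sphMeas d) = Z₁ := rfl
  have hMint : ∫ z, a z * Real.exp (κ₁ * a z) ∂(sphMeas d) = Mfun d μ₁ κ₁ := rfl
  -- the cross moment
  have hcross : ∫ z, b z * Real.exp (κ₁ * a z) ∂(sphMeas d) = t * Mfun d μ₁ κ₁ := by
    set w : EuclideanSpace ℝ (Fin d) :=
      (μ₂ : EuclideanSpace ℝ (Fin d)) - t • (μ₁ : EuclideanSpace ℝ (Fin d)) with hwdef
    have hw : ⟪(μ₁ : EuclideanSpace ℝ (Fin d)), w⟫ = 0 := by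
      rw [hwdef, inner_sub_right, real_inner_smul_right, ← ht,
        real_inner_self_eq_norm_mul_norm, norm_eq_of_mem_sphere μ₁]
      ring
    have hbz : ∀ z : sphere (0 : EuclideanSpace ℝ (Fin d)) 1,
        b z = t * a z + ⟪w, (z : EuclideanSpace ℝ (Fin d))⟫ := by
      intro z
      rw [hwdef, inner_sub_left, real_inner_smul_left, ha, hb]
      ring
    have hIw : Integrable (fun z : sphere (0 : EuclideanSpace ℝ (Fin d)) 1 =>
        ⟪w, (z : EuclideanSpace ℝ (Fin d))⟫ *
        Real.exp (κ₁ * a z)) (sphMeas d) := integrable_cont ((cont_inner w).mul hce)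
    calc ∫ z, b z * Real.exp (κ₁ * a z) ∂(sphMeas d)
        = ∫ z, (t * (a z * Real.exp (κ₁ * a z))
            + ⟪w, (z : EuclideanSpace ℝ (Fin d))⟫ * Real.exp (κ₁ * a z)) ∂(sphMeas d) := by
          refine integral_congr_ae (Filter.Eventually.of_forall fun z => ?_)
          simp only [hbz]; ring
      _ = t * Mfun d μ₁ κ₁ + 0 := by
          rw [integral_add (hIa.const_mul t) hIw, integral_const_mul, hMint,
            integral_inner_orth_zero μ₁ κ₁ w hw]
      _ = t * Mfun d μ₁ κ₁ := add_zero _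
  rw [hZint, hMint, hcross]
  field_simp
  ring
end
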